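/- arXiv:1309.4370 — 2 statements merged into one kernel-verified Lean document; each statement's English description precedes it below -/
import Mathlib

section
/- Let G be a self-adjoint operator on a Hilbert space H and S a bounded self-adjoint operator. With φ(x) = x/√(1+x²), one has the norm estimate ‖φ(G) − φ(G+S)‖ ≤ (2/π) ‖S‖ ∫₁^∞ (u/√(u²−1)) · (1/u²) du = ‖S‖, given the integral representation φ(G) − φ(G+S) = (1/π) ∫₁^∞ (u/√(u²−1)) [R(u) S R_S(u) + R(−u) S R_S(−u)] du, where R(u) = (G+iu)^{-1} and R_S(u) = (G+S+iu)^{-1}. In particular, the map S ↦ φ(G+S) is norm continuous in S. -/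
/-!
The resolvent bounds give `‖R(±u) S R_S(±u)‖ ≤ ‖S‖ / u²`, so the integrand of the
representation has norm at most `2 ‖S‖ / (u √(u² - 1))`. Since `-arcsin (1/u)` is an
antiderivative of `1 / (u √(u² - 1))` which tends to `0` at infinity and equals `-π/2` at
`u = 1`, the integral of this bound over `(1, ∞)` is `π ‖S‖`, and the prefactor `1/π` leaves
`‖S‖`.
-/

open MeasureTheory Set Filter Topology

theorem hasDerivAt_neg_arcsin_inv {u : ℝ} (hu : 1 < u) :
    HasDerivAt (fun u : ℝ => -Real.arcsin u⁻¹) (1 / (u * √(u ^ 2 - 1))) u := by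
  have hu0 : 0 < u := one_pos.trans hu
  have hinv_lt : u⁻¹ < 1 := inv_lt_one_of_one_lt₀ hu
  have hinv_pos : 0 < u⁻¹ := inv_pos.mpr hu0
  have hsq : 0 < u ^ 2 - 1 := by nlinarith
  have hsqrt : √(1 - u⁻¹ ^ 2) = √(u ^ 2 - 1) / u := by
    rw [show 1 - u⁻¹ ^ 2 = (u ^ 2 - 1) / u ^ 2 by field_simp, Real.sqrt_div hsq.le,
      Real.sqrt_sq hu0.le]
  refine ((Real.hasDerivAt_arcsin (by linarith) hinv_lt.ne).comp u
    (hasDerivAt_inv hu0.ne')).neg.congr_deriv ?_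
  have : 0 < √(u ^ 2 - 1) := Real.sqrt_pos.mpr hsq
  rw [hsqrt]
  field_simp

theorem tendsto_neg_arcsin_inv_atTop :
    Tendsto (fun u : ℝ => -Real.arcsin u⁻¹) atTop (𝓝 0) := by
  simpa using ((Real.continuous_arcsin.tendsto 0).comp tendsto_inv_atTop_zero).neg

theorem continuousWithinAt_neg_arcsin_inv_one :
    ContinuousWithinAt (fun u : ℝ => -Real.arcsin u⁻¹) (Ici 1) 1 :=
  (Real.continuous_arcsin.continuousAt.comp
    (continuousAt_inv₀ one_ne_zero)).neg.continuousWithinAt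

theorem one_div_mul_sqrt_sq_sub_one_nonneg {u : ℝ} (hu : 1 < u) :
    0 ≤ 1 / (u * √(u ^ 2 - 1)) := by
  have : 0 < u := one_pos.trans hu
  positivity

theorem integrableOn_Ioi_one_div_mul_sqrt_sq_sub_one :
    IntegrableOn (fun u : ℝ => 1 / (u * √(u ^ 2 - 1))) (Ioi 1) :=
  integrableOn_Ioi_deriv_of_nonneg continuousWithinAt_neg_arcsin_inv_one
    (fun _ hu => hasDerivAt_neg_arcsin_inv hu) (fun _ hu => one_div_mul_sqrt_sq_sub_one_nonneg hu)
    tendsto_neg_arcsin_inv_atTop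

theorem integral_Ioi_one_div_mul_sqrt_sq_sub_one :
    ∫ u in Ioi (1 : ℝ), 1 / (u * √(u ^ 2 - 1)) = Real.pi / 2 := by
  have := integral_Ioi_of_hasDerivAt_of_nonneg continuousWithinAt_neg_arcsin_inv_one
    (fun _ hu => hasDerivAt_neg_arcsin_inv hu) (fun _ hu => one_div_mul_sqrt_sq_sub_one_nonneg hu)
    tendsto_neg_arcsin_inv_atTop
  simpa [Real.arcsin_one] using this

section ResolventSandwich

variable {A : Type*} [NormedRing A] (S : A)

theorem norm_mul_mul_le_of_norm_le_inv {a b : A} {u : ℝ} (hu : 0 < u) (ha : ‖a‖ ≤ 1 / u)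
    (hb : ‖b‖ ≤ 1 / u) : ‖a * S * b‖ ≤ ‖S‖ / u ^ 2 :=
  calc ‖a * S * b‖ ≤ ‖a‖ * ‖S‖ * ‖b‖ := norm_mul₃_le
    _ ≤ 1 / u * ‖S‖ * (1 / u) := by gcongr
    _ = ‖S‖ / u ^ 2 := by ring

variable [NormedSpace ℝ A] {R RS : ℝ → A}

theorem norm_smul_resolvent_sandwich_le (hR : ∀ u : ℝ, u ≠ 0 → ‖R u‖ ≤ 1 / |u|)
    (hRS : ∀ u : ℝ, u ≠ 0 → ‖RS u‖ ≤ 1 / |u|) {u : ℝ} (hu : 1 < u) :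
    ‖(u / √(u ^ 2 - 1)) • (R u * S * RS u + R (-u) * S * RS (-u))‖
      ≤ 2 * ‖S‖ * (1 / (u * √(u ^ 2 - 1))) := by
  have hu0 : 0 < u := one_pos.trans hu
  have hsqrt : 0 < √(u ^ 2 - 1) := Real.sqrt_pos.mpr (by nlinarith)
  have hbound : ∀ v : ℝ, |v| = u → ‖R v * S * RS v‖ ≤ ‖S‖ / u ^ 2 := by
    intro v hv
    have hv0 : v ≠ 0 := by rintro rfl; simp at hv; linarith
    rw [← hv] at hu0 ⊢
    exact norm_mul_mul_le_of_norm_le_inv S hu0 (hR v hv0) (hRS v hv0)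
  have hplus := hbound u (abs_of_pos hu0)
  have hminus := hbound (-u) (by rw [abs_neg, abs_of_pos hu0])
  calc ‖(u / √(u ^ 2 - 1)) • (R u * S * RS u + R (-u) * S * RS (-u))‖
      ≤ u / √(u ^ 2 - 1) * (‖R u * S * RS u‖ + ‖R (-u) * S * RS (-u)‖) := by
        rw [norm_smul, Real.norm_of_nonneg (by positivity)]
        gcongr
        exact norm_add_le _ _
    _ ≤ u / √(u ^ 2 - 1) * (‖S‖ / u ^ 2 + ‖S‖ / u ^ 2) := by gcongr
    _ = 2 * ‖S‖ * (1 / (u * √(u ^ 2 - 1))) := by field_simp; ring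

theorem norm_integral_resolvent_sandwich_le [CompleteSpace A]
    (hR : ∀ u : ℝ, u ≠ 0 → ‖R u‖ ≤ 1 / |u|) (hRS : ∀ u : ℝ, u ≠ 0 → ‖RS u‖ ≤ 1 / |u|) :
    ‖∫ u in Ioi (1 : ℝ), (u / √(u ^ 2 - 1)) • (R u * S * RS u + R (-u) * S * RS (-u))‖
      ≤ Real.pi * ‖S‖ := by
  calc _ ≤ ∫ u in Ioi (1 : ℝ), 2 * ‖S‖ * (1 / (u * √(u ^ 2 - 1))) := by
        refine norm_integral_le_of_norm_le
          (integrableOn_Ioi_one_div_mul_sqrt_sq_sub_one.const_mul _) ?_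
        filter_upwards [ae_restrict_mem measurableSet_Ioi] with u hu
        exact norm_smul_resolvent_sandwich_le S hR hRS hu
    _ = Real.pi * ‖S‖ := by
        rw [integral_const_mul, integral_Ioi_one_div_mul_sqrt_sq_sub_one]
        ring

end ResolventSandwich

theorem stmt4_general {H : Type*} [NormedAddCommGroup H] [InnerProductSpace ℂ H] [CompleteSpace H]
    (G S : H →L[ℂ] H)
    (R RS : ℝ → (H →L[ℂ] H))
    (hR : ∀ u : ℝ, u ≠ 0 → ‖R u‖ ≤ 1 / |u|)
    (hRS : ∀ u : ℝ, u ≠ 0 → ‖RS u‖ ≤ 1 / |u|)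
    (hrep : cfc (fun x : ℝ => x / Real.sqrt (1 + x ^ 2)) G
        - cfc (fun x : ℝ => x / Real.sqrt (1 + x ^ 2)) (G + S)
      = (1 / Real.pi) • ∫ u in Ioi (1 : ℝ),
          (u / Real.sqrt (u ^ 2 - 1)) • (R u * S * RS u + R (-u) * S * RS (-u))) :
    (∫ u in Ioi (1 : ℝ), 1 / (u * Real.sqrt (u ^ 2 - 1))) = Real.pi / 2 ∧
    ‖cfc (fun x : ℝ => x / Real.sqrt (1 + x ^ 2)) G
      - cfc (fun x : ℝ => x / Real.sqrt (1 + x ^ 2)) (G + S)‖ ≤ ‖S‖ := by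
  refine ⟨integral_Ioi_one_div_mul_sqrt_sq_sub_one, ?_⟩
  rw [hrep, norm_smul, Real.norm_of_nonneg (by positivity)]
  calc 1 / Real.pi * ‖∫ u in Ioi (1 : ℝ),
        (u / √(u ^ 2 - 1)) • (R u * S * RS u + R (-u) * S * RS (-u))‖
      ≤ 1 / Real.pi * (Real.pi * ‖S‖) := by
        gcongr
        exact norm_integral_resolvent_sandwich_le S hR hRS
    _ = ‖S‖ := by field_simp

/-- Let `G` be self-adjoint and `S` bounded self-adjoint, and
`φ(x) = x/√(1+x²)`.  Given the integral representation
`φ(G) − φ(G+S) = (1/π) ∫₁^∞ (u/√(u²−1)) [R(u) S R_S(u) + R(−u) S R_S(−u)] du`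
with resolvents satisfying `‖R(u)‖ ≤ 1/|u|`, `‖R_S(u)‖ ≤ 1/|u|`, and using
`∫₁^∞ u⁻¹ (u²−1)^{-1/2} du = π/2`, one gets `‖φ(G) − φ(G+S)‖ ≤ ‖S‖`. -/
theorem stmt4 {H : Type*} [NormedAddCommGroup H] [InnerProductSpace ℂ H] [CompleteSpace H]
    (G S : H →L[ℂ] H) (hG : IsSelfAdjoint G) (hS : IsSelfAdjoint S)
    (R RS : ℝ → (H →L[ℂ] H))
    (hR : ∀ u : ℝ, u ≠ 0 → ‖R u‖ ≤ 1 / |u|)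
    (hRS : ∀ u : ℝ, u ≠ 0 → ‖RS u‖ ≤ 1 / |u|)
    (hInt : IntegrableOn (fun u : ℝ =>
        (u / Real.sqrt (u ^ 2 - 1)) • (R u * S * RS u + R (-u) * S * RS (-u)))
        (Ioi (1 : ℝ)))
    (hrep : cfc (fun x : ℝ => x / Real.sqrt (1 + x ^ 2)) G
        - cfc (fun x : ℝ => x / Real.sqrt (1 + x ^ 2)) (G + S)
      = (1 / Real.pi) • ∫ u in Ioi (1 : ℝ),
          (u / Real.sqrt (u ^ 2 - 1)) • (R u * S * RS u + R (-u) * S * RS (-u))) :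
    (∫ u in Ioi (1 : ℝ), 1 / (u * Real.sqrt (u ^ 2 - 1))) = Real.pi / 2 ∧
    ‖cfc (fun x : ℝ => x / Real.sqrt (1 + x ^ 2)) G
      - cfc (fun x : ℝ => x / Real.sqrt (1 + x ^ 2)) (G + S)‖ ≤ ‖S‖ :=
  stmt4_general G S R RS hR hRS hrep
end

section
/- The subalgebra of C₀(ℝ) generated by w(t) = 1/(1+t²) and the product w(t)v(t) = t/(1+t²)², where v(t) = t/(1+t²), separates points of ℝ and vanishes nowhere identically; hence by Stone–Weierstrass every function in C₀(ℝ) can be uniformly approximated by polynomials (without constant term) in w and wv. Moreover, every even function in C₀(ℝ) can be uniformly approximated by a polynomial in w without constant term, and every odd function in C₀(ℝ) by a function of the form P(w)·v with P(0) = 0. -/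
/-!
An even `f ∈ C₀(ℝ)` is a continuous function of `w = 1/(1+t²) ∈ [0, 1]` (via `t² = w⁻¹ - 1`)
vanishing at `w = 0`, so Weierstrass approximation on `[0, 1]` handles it. An odd `f` is first
soft-thresholded so that it vanishes near `0` and near infinity; divided by `v = t/(1+t²)` it
becomes even, and multiplying back by `|v| ≤ 1` costs nothing. A general `f` is the sum of its
even and odd parts, and `P(w) v = (P/X)(w) · wv` when `P(0) = 0`.
-/

open Filter Topology

theorem exists_polynomial_coeff_zero_near_of_continuousOn {a b : ℝ} {g : ℝ → ℝ}
    (hg : ContinuousOn g (Set.Icc a b)) (h0 : (0 : ℝ) ∈ Set.Icc a b) (hg0 : g 0 = 0)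
    {ε : ℝ} (hε : 0 < ε) :
    ∃ P : Polynomial ℝ, P.coeff 0 = 0 ∧ ∀ x ∈ Set.Icc a b, |P.eval x - g x| < ε := by
  obtain ⟨Q, hQ⟩ := exists_polynomial_near_of_continuousOn a b g hg (ε / 2) (half_pos hε)
  have hQ0 : |Q.coeff 0| < ε / 2 := by
    simpa [hg0, Polynomial.coeff_zero_eq_eval_zero] using hQ 0 h0
  refine ⟨Q - Polynomial.C (Q.coeff 0), by simp, fun x hx => ?_⟩
  calc |(Q - Polynomial.C (Q.coeff 0)).eval x - g x|
      = |(Q.eval x - g x) - Q.coeff 0| := by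
        simp only [Polynomial.eval_sub, Polynomial.eval_C]; ring_nf
    _ ≤ |Q.eval x - g x| + |Q.coeff 0| := abs_sub _ _
    _ < ε := by linarith [hQ x hx]

def softThreshold (δ x : ℝ) : ℝ := x - max (-δ) (min δ x)

theorem continuous_softThreshold (δ : ℝ) : Continuous (softThreshold δ) := by
  unfold softThreshold; fun_prop

theorem softThreshold_neg {δ : ℝ} (hδ : 0 ≤ δ) (x : ℝ) :
    softThreshold δ (-x) = -softThreshold δ x := by
  simp only [softThreshold, max_def, min_def]
  split_ifs <;> linarith

theorem abs_sub_softThreshold_le {δ : ℝ} (hδ : 0 ≤ δ) (x : ℝ) : |x - softThreshold δ x| ≤ δ := by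
  unfold softThreshold
  rw [sub_sub_cancel, abs_le]
  constructor
  · exact le_max_left _ _
  · exact max_le (by linarith) (min_le_left _ _)

theorem softThreshold_eq_zero {δ x : ℝ} (h : |x| ≤ δ) : softThreshold δ x = 0 := by
  rw [abs_le] at h
  simp [softThreshold, min_eq_right h.2, max_eq_right h.1]

theorem Filter.Tendsto.eventually_softThreshold_eq_zero {α : Type*} {l : Filter α} {f : α → ℝ}
    (hf : Tendsto f l (𝓝 0)) {δ : ℝ} (hδ : 0 < δ) : ∀ᶠ t in l, softThreshold δ (f t) = 0 := by
  filter_upwards [(hf.abs.eventually (gt_mem_nhds (by simpa using hδ)))] with t ht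
  exact softThreshold_eq_zero ht.le

theorem one_div_one_add_sq_mem_Icc (t : ℝ) : 1 / (1 + t ^ 2) ∈ Set.Icc (0 : ℝ) 1 :=
  ⟨by positivity, by rw [div_le_one (by positivity)]; nlinarith [sq_nonneg t]⟩

theorem abs_div_one_add_sq_le_one (t : ℝ) : |t / (1 + t ^ 2)| ≤ 1 := by
  rw [abs_div, abs_of_pos (show (0 : ℝ) < 1 + t ^ 2 by positivity), div_le_one (by positivity)]
  nlinarith [sq_abs t, sq_nonneg (|t| - 1)]

theorem Function.Even.exists_continuousOn_comp {f : ℝ → ℝ} (hf : Continuous f)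
    (h0 : Tendsto f (cocompact ℝ) (𝓝 0)) (he : f.Even) :
    ∃ g : ℝ → ℝ, ContinuousOn g (Set.Icc 0 1) ∧ g 0 = 0 ∧ ∀ t, f t = g (1 / (1 + t ^ 2)) := by
  classical
  refine ⟨Function.update (fun s => f √(s⁻¹ - 1)) 0 0, fun s _ => ?_, by simp, fun t => ?_⟩
  · rcases eq_or_ne s 0 with rfl | hs
    · rw [continuousWithinAt_update_same]
      have hsqrt : Tendsto (fun s : ℝ => √(s⁻¹ - 1)) (𝓝[>] 0) atTop :=
        Real.tendsto_sqrt_atTop.comp (tendsto_atTop_add_const_right _ _ tendsto_inv_nhdsGT_zero)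
      refine (h0.mono_left atTop_le_cocompact).comp (hsqrt.mono_left (nhdsWithin_mono _ ?_))
      exact fun x hx => lt_of_le_of_ne hx.1.1 (Ne.symm hx.2)
    · rw [continuousWithinAt_update_of_ne hs]
      exact (hf.continuousAt.comp (by fun_prop (disch := exact hs))).continuousWithinAt
  · have hw : 1 / (1 + t ^ 2) ≠ 0 := by positivity
    rw [Function.update_of_ne hw, one_div, inv_inv, add_sub_cancel_left, Real.sqrt_sq_eq_abs]
    rcases abs_cases t with ⟨h, _⟩ | ⟨h, _⟩ <;> rw [h]
    exact (he t).symm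

theorem exists_polynomial_approx_of_even {f : ℝ → ℝ} (hf : Continuous f)
    (h0 : Tendsto f (cocompact ℝ) (𝓝 0)) (he : f.Even) {ε : ℝ} (hε : 0 < ε) :
    ∃ P : Polynomial ℝ, P.coeff 0 = 0 ∧ ∀ t : ℝ, |f t - P.eval (1 / (1 + t ^ 2))| ≤ ε := by
  obtain ⟨g, hg, hg0, hfg⟩ := Function.Even.exists_continuousOn_comp hf h0 he
  obtain ⟨P, hP0, hP⟩ :=
    exists_polynomial_coeff_zero_near_of_continuousOn hg (by norm_num) hg0 hε
  refine ⟨P, hP0, fun t => ?_⟩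
  rw [hfg, abs_sub_comm]
  exact (hP _ (one_div_one_add_sq_mem_Icc t)).le

theorem exists_polynomial_approx_of_odd {f : ℝ → ℝ} (hf : Continuous f)
    (h0 : Tendsto f (cocompact ℝ) (𝓝 0)) (ho : f.Odd) {ε : ℝ} (hε : 0 < ε) :
    ∃ P : Polynomial ℝ, P.coeff 0 = 0 ∧
      ∀ t : ℝ, |f t - P.eval (1 / (1 + t ^ 2)) * (t / (1 + t ^ 2))| ≤ ε := by
  set f₁ : ℝ → ℝ := fun t => softThreshold (ε / 2) (f t)
  set g : ℝ → ℝ := fun t => f₁ t / (t / (1 + t ^ 2))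
  have hf0 : f 0 = 0 := ho.map_zero
  have hg_near_zero : ∀ᶠ t in 𝓝 0, g t = 0 := by
    filter_upwards [(hf0 ▸ hf.tendsto 0).eventually_softThreshold_eq_zero (half_pos hε)]
      with t ht
    simp [g, f₁, ht]
  have hg : Continuous g := by
    refine continuous_iff_continuousAt.2 fun t => ?_
    rcases eq_or_ne t 0 with rfl | ht
    · exact continuousAt_const.congr (hg_near_zero.mono fun t h => h.symm)
    · have hv : Continuous fun t : ℝ => t / (1 + t ^ 2) :=
        continuous_id.div (by fun_prop) fun t => by positivity
      exact ((continuous_softThreshold _).comp hf).continuousAt.div hv.continuousAt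
        (div_ne_zero ht (by positivity))
  have hg0 : Tendsto g (cocompact ℝ) (𝓝 0) := by
    refine tendsto_const_nhds.congr' ?_
    filter_upwards [h0.eventually_softThreshold_eq_zero (half_pos hε)] with t ht
    simp [g, f₁, ht]
  have hge : g.Even := fun t => by
    simp only [g, f₁, ho.eq, softThreshold_neg (half_pos hε).le, neg_sq, neg_div, div_neg, neg_neg]
  have hf₁ : ∀ t, f₁ t = g t * (t / (1 + t ^ 2)) := fun t => by
    rcases eq_or_ne t 0 with rfl | ht
    · simp [f₁, hf0, softThreshold_eq_zero (abs_zero.trans_le (half_pos hε).le)]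
    · exact (div_mul_cancel₀ _ (div_ne_zero ht (by positivity))).symm
  obtain ⟨P, hP0, hP⟩ := exists_polynomial_approx_of_even hg hg0 hge (half_pos hε)
  refine ⟨P, hP0, fun t => ?_⟩
  calc |f t - P.eval (1 / (1 + t ^ 2)) * (t / (1 + t ^ 2))|
      = |(f t - f₁ t) + (g t - P.eval (1 / (1 + t ^ 2))) * (t / (1 + t ^ 2))| := by
        rw [hf₁]; ring_nf
    _ ≤ |f t - f₁ t| + |g t - P.eval (1 / (1 + t ^ 2))| * |t / (1 + t ^ 2)| := by
        rw [← abs_mul]; exact abs_add_le _ _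
    _ ≤ ε / 2 + ε / 2 * 1 := by
        gcongr
        · exact abs_sub_softThreshold_le (half_pos hε).le _
        · exact hP t
        · exact abs_div_one_add_sq_le_one t
    _ = ε := by ring

theorem MvPolynomial.eval_aeval_X {R σ : Type*} [CommSemiring R] (x : σ → R) (i : σ)
    (P : Polynomial R) : MvPolynomial.eval x (Polynomial.aeval (X i) P) = P.eval (x i) := by
  rw [← Polynomial.coe_aeval_eq_eval, ← aeval_X (R := R) x i, Polynomial.aeval_algHom_apply]
  rfl

theorem Polynomial.eval_eq_mul_eval_divX {R : Type*} [CommSemiring R] {P : Polynomial R}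
    (hP : P.coeff 0 = 0) (x : R) : P.eval x = x * P.divX.eval x := by
  conv_lhs => rw [← P.X_mul_divX_add, hP]
  simp

theorem exists_mvPolynomial_approx {f : ℝ → ℝ} (hf : Continuous f)
    (h0 : Tendsto f (cocompact ℝ) (𝓝 0)) {ε : ℝ} (hε : 0 < ε) :
    ∃ p : MvPolynomial (Fin 2) ℝ, MvPolynomial.coeff 0 p = 0 ∧
      ∀ t : ℝ, |f t - MvPolynomial.eval
        (fun i : Fin 2 => if i = 0 then 1 / (1 + t ^ 2)
          else (1 / (1 + t ^ 2)) * (t / (1 + t ^ 2))) p| ≤ ε := by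
  have h0' : Tendsto (fun t => f (-t)) (cocompact ℝ) (𝓝 0) :=
    h0.comp (Homeomorph.neg ℝ).map_cocompact.le
  obtain ⟨Pe, hPe0, hPe⟩ := exists_polynomial_approx_of_even
    (f := fun t => (f t + f (-t)) / 2) (by fun_prop) (by simpa using (h0.add h0').div_const 2)
    (fun t => by simp only [neg_neg, add_comm]) (half_pos hε)
  obtain ⟨Po, hPo0, hPo⟩ := exists_polynomial_approx_of_odd
    (f := fun t => (f t - f (-t)) / 2) (by fun_prop) (by simpa using (h0.sub h0').div_const 2)
    (fun t => by simp only [neg_neg]; ring) (half_pos hε)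
  open MvPolynomial in
  refine ⟨Polynomial.aeval (X 0) Pe + Polynomial.aeval (X 0) Po.divX * X 1, ?_, fun t => ?_⟩
  · rw [← constantCoeff_eq, ← eval_zero, map_add, map_mul, eval_X, Pi.zero_apply, mul_zero,
      add_zero, eval_aeval_X, Pi.zero_apply, ← Polynomial.coeff_zero_eq_eval_zero, hPe0]
  · simp only [map_add, map_mul, eval_aeval_X, eval_X, if_true,
      if_neg (show (1 : Fin 2) ≠ 0 by decide)]
    calc _ = |((f t + f (-t)) / 2 - Pe.eval (1 / (1 + t ^ 2)))
          + ((f t - f (-t)) / 2 - Po.eval (1 / (1 + t ^ 2)) * (t / (1 + t ^ 2)))| := by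
          rw [Polynomial.eval_eq_mul_eval_divX hPo0]; ring_nf
      _ ≤ ε / 2 + ε / 2 := (abs_add_le _ _).trans (add_le_add (hPe t) (hPo t))
      _ = ε := add_halves ε

theorem eq_of_one_div_one_add_sq_eq {x y : ℝ} (hw : 1 / (1 + x ^ 2) = 1 / (1 + y ^ 2))
    (hwv : 1 / (1 + x ^ 2) * (x / (1 + x ^ 2)) = 1 / (1 + y ^ 2) * (y / (1 + y ^ 2))) :
    x = y := by
  have hden : 1 + x ^ 2 = 1 + y ^ 2 := by simpa only [one_div, inv_inj] using hw
  rw [← hw, hden] at hwv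
  exact (div_left_inj' (by positivity)).1 (mul_left_cancel₀ (by positivity) hwv)

/-- With `w(t) = 1/(1+t²)` and `v(t) = t/(1+t²)` (so `v² = w − w²`),
the pair `(w, w·v)` separates points of `ℝ` and vanishes nowhere; by Stone–Weierstrass
every `f ∈ C₀(ℝ)` is a uniform limit of polynomials without constant term in `w` and
`w·v`; moreover every even `f ∈ C₀(ℝ)` is a uniform limit of polynomials in `w` without
constant term, and every odd `f ∈ C₀(ℝ)` of functions `P(w)·v` with `P(0) = 0`. -/
theorem stmt8 :
    (∀ x y : ℝ, x ≠ y →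
        (1 / (1 + x ^ 2) ≠ 1 / (1 + y ^ 2) ∨
         (1 / (1 + x ^ 2)) * (x / (1 + x ^ 2)) ≠ (1 / (1 + y ^ 2)) * (y / (1 + y ^ 2)))) ∧
    (∀ x : ℝ, ¬ (1 / (1 + x ^ 2) = 0 ∧ (1 / (1 + x ^ 2)) * (x / (1 + x ^ 2)) = 0)) ∧
    (∀ f : ℝ → ℝ, Continuous f → Tendsto f (cocompact ℝ) (nhds 0) →
      ∀ ε : ℝ, 0 < ε →
        ∃ p : MvPolynomial (Fin 2) ℝ, MvPolynomial.coeff 0 p = 0 ∧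
          ∀ t : ℝ, |f t - MvPolynomial.eval
            (fun i : Fin 2 => if i = 0 then 1 / (1 + t ^ 2)
              else (1 / (1 + t ^ 2)) * (t / (1 + t ^ 2))) p| ≤ ε) ∧
    (∀ f : ℝ → ℝ, Continuous f → Tendsto f (cocompact ℝ) (nhds 0) →
      (∀ t : ℝ, f (-t) = f t) →
      ∀ ε : ℝ, 0 < ε →
        ∃ P : Polynomial ℝ, P.coeff 0 = 0 ∧
          ∀ t : ℝ, |f t - P.eval (1 / (1 + t ^ 2))| ≤ ε) ∧
    (∀ f : ℝ → ℝ, Continuous f → Tendsto f (cocompact ℝ) (nhds 0) →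
      (∀ t : ℝ, f (-t) = - f t) →
      ∀ ε : ℝ, 0 < ε →
        ∃ P : Polynomial ℝ, P.coeff 0 = 0 ∧
          ∀ t : ℝ, |f t - P.eval (1 / (1 + t ^ 2)) * (t / (1 + t ^ 2))| ≤ ε) :=
  ⟨fun _ _ hxy => not_and_or.1 fun h => hxy (eq_of_one_div_one_add_sq_eq h.1 h.2),
    fun x h => (by positivity : 1 / (1 + x ^ 2) ≠ 0) h.1,
    fun _ hf h0 _ hε => exists_mvPolynomial_approx hf h0 hε,
    fun _ hf h0 he _ hε => exists_polynomial_approx_of_even hf h0 he hε,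
    fun _ hf h0 ho _ hε => exists_polynomial_approx_of_odd hf h0 ho hε⟩
end
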